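/- arXiv:1405.7429 — 4 statements merged into one kernel-verified Lean document; each statement's English description precedes it below -/
import Mathlib

section
/- Let f : {0,1}^n → {0,1} be a Boolean function and define the sign vector ψ_f ∈ ℝ^(2^n) by ψ_f(s) = (−1)^(f(s)) / √(2^n). If ψ_f equals a tensor product v₁ ⊗ v₂ ⊗ ... ⊗ vₙ of n unit vectors vᵢ ∈ ℝ², then each vᵢ is (up to an overall global sign ±1 distributed among the factors) equal to |+⟩ = (1,1)/√2 or |−⟩ = (1,−1)/√2. -/
/-- If the sign vector `ψ_f(s) = (-1)^(f s) / √(2^n)` of a Boolean function `f`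
factors as a tensor product of `n` unit vectors in `ℝ²`, then each factor is,
up to a sign, `|+⟩ = (1,1)/√2` or `|-⟩ = (1,-1)/√2`. -/
theorem stmt0 (n : ℕ) (f : (Fin n → Bool) → Bool) (v : Fin n → Bool → ℝ)
    (hunit : ∀ i, (v i false) ^ 2 + (v i true) ^ 2 = 1)
    (hprod : ∀ s : Fin n → Bool,
      ((-1 : ℝ)) ^ (if f s then 1 else 0) / Real.sqrt (2 ^ n) = ∏ i, v i (s i)) :
    ∀ i, ∃ c e : ℝ, (c = 1 ∨ c = -1) ∧ (e = 1 ∨ e = -1) ∧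
      v i false = c / Real.sqrt 2 ∧ v i true = c * e / Real.sqrt 2 := by
  intro i
  have hs2 : Real.sqrt ((2:ℝ) ^ n) > 0 := Real.sqrt_pos.mpr (by positivity)
  have key : ∀ b : Bool,
      ((-1:ℝ)) ^ (if f (fun j => if j = i then b else false) then 1 else 0) /
        Real.sqrt (2 ^ n)
      = v i b * ∏ j ∈ Finset.univ.erase i, v j false := by
    intro b
    rw [hprod]
    rw [← Finset.mul_prod_erase Finset.univ _ (Finset.mem_univ i)]
    simp only [if_pos rfl]
    congr 1
    refine Finset.prod_congr rfl fun j hj => ?_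
    rw [if_neg (Finset.ne_of_mem_erase hj)]
  have habs : ∀ b, |v i b * ∏ j ∈ Finset.univ.erase i, v j false|
      = 1 / Real.sqrt (2 ^ n) := by
    intro b
    rw [← key b, abs_div, abs_pow, abs_neg, abs_one, one_pow, abs_of_pos hs2]
  have hP : (∏ j ∈ Finset.univ.erase i, v j false) ≠ 0 := by
    intro h
    have h1 := habs false
    rw [h, mul_zero, abs_zero] at h1
    have : (0:ℝ) < 1 / Real.sqrt (2 ^ n) := by positivity
    rw [← h1] at this
    exact lt_irrefl 0 this
  have hxy : |v i false| = |v i true| := by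
    have h1 := habs false
    have h2 := habs true
    rw [abs_mul] at h1 h2
    exact mul_right_cancel₀ (abs_ne_zero.mpr hP) (h1.trans h2.symm)
  have hsq : (v i false) ^ 2 = (v i true) ^ 2 := by
    rw [← sq_abs (v i false), ← sq_abs (v i true), hxy]
  have hx2 : (v i false) ^ 2 = 1 / 2 := by
    have := hunit i
    nlinarith
  have hy2 : (v i true) ^ 2 = 1 / 2 := by rw [← hsq]; exact hx2
  have hr2 : (Real.sqrt 2) ^ 2 = 2 := Real.sq_sqrt (by norm_num)
  have hr2pos : (0:ℝ) < Real.sqrt 2 := Real.sqrt_pos.mpr (by norm_num)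
  set c := v i false * Real.sqrt 2 with hc
  set e := v i true * Real.sqrt 2 * c with he
  have hc2 : c ^ 2 = 1 := by rw [hc, mul_pow, hx2, hr2]; norm_num
  have he2 : e ^ 2 = 1 := by
    rw [he, mul_pow, mul_pow, hy2, hr2, hc2]; norm_num
  refine ⟨c, e, ?_, ?_, ?_, ?_⟩
  · rcases mul_eq_zero.mp (show (c - 1) * (c + 1) = 0 by nlinarith) with h | h
    · left; linarith
    · right; linarith
  · rcases mul_eq_zero.mp (show (e - 1) * (e + 1) = 0 by nlinarith) with h | h
    · left; linarith
    · right; linarith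
  · field_simp [hc]
    exact hc.symm
  · have hkey : v i false ^ 2 * Real.sqrt 2 ^ 2 = 1 := by rw [hx2, hr2]; norm_num
    rw [he, hc, eq_div_iff hr2pos.ne']
    linear_combination (-(v i true * Real.sqrt 2)) * hkey
end

section
/- Let σ : {0,1}^n → {−1,+1} and identify {0,1}^n with {0,1,...,2^n−1} via binary representation (bit k has weight 2^k). Then σ is of the product form σ(s) = c · ∏ₖ εₖ^(sₖ) (with c, εₖ ∈ {−1,+1}) if and only if for every k with 0 ≤ k ≤ n−1, either σ(j + 2^k) = σ(j) for all 0 ≤ j < 2^k, or σ(j + 2^k) = −σ(j) for all 0 ≤ j < 2^k. -/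
lemma testBit_add_pow {k j : ℕ} (hj : j < 2 ^ k) (i : ℕ) :
    (j + 2 ^ k).testBit i = if i = k then true else j.testBit i := by
  rcases lt_trichotomy i k with h | h | h
  · simp [h.ne, Nat.add_comm j, Nat.testBit_two_pow_add_gt h]
  · subst h
    simp [Nat.add_comm j, Nat.testBit_two_pow_add_eq, Nat.testBit_lt_two_pow hj]
  · have h1 : j + 2 ^ k < 2 ^ i := by
      calc j + 2 ^ k < 2 ^ k + 2 ^ k := by omega
      _ = 2 ^ (k + 1) := by ring
      _ ≤ 2 ^ i := Nat.pow_le_pow_right (by norm_num) h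
    have h2 : j < 2 ^ i := lt_of_lt_of_le hj (Nat.pow_le_pow_right (by norm_num) h.le)
    simp [Nat.testBit_lt_two_pow h1, Nat.testBit_lt_two_pow h2,
      (Nat.lt_iff_le_and_ne.mp h).2.symm]

lemma prod_split {n k : ℕ} (hk : k < n) {j : ℕ} (hj : j < 2 ^ k) (ε : Fin n → ℤ) :
    (∏ i : Fin n, (if (j + 2 ^ k).testBit i.val then ε i else 1)) =
      ε ⟨k, hk⟩ * ∏ i : Fin n, (if j.testBit i.val then ε i else 1) := by
  set k0 : Fin n := ⟨k, hk⟩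
  have hF : ∀ i : Fin n, (if (j + 2 ^ k).testBit i.val then ε i else 1) =
      (if i = k0 then ε i else (if j.testBit i.val then ε i else 1)) := by
    intro i
    rw [testBit_add_pow hj]
    by_cases h : i = k0
    · simp [h, k0]
    · have : ¬ (i.val = k) := fun hh => h (Fin.ext hh)
      simp [this, h]
  rw [Finset.prod_congr rfl (fun i _ => hF i)]
  rw [← Finset.mul_prod_erase Finset.univ _ (Finset.mem_univ k0),
    ← Finset.mul_prod_erase Finset.univ (fun i => if j.testBit i.val then ε i else 1)
      (Finset.mem_univ k0)]
  have hjk : j.testBit k = false := Nat.testBit_lt_two_pow hj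
  simp only [if_pos rfl, hjk, k0, if_neg Bool.false_ne_true, one_mul]
  congr 1
  refine Finset.prod_congr rfl fun i hi => ?_
  rw [if_neg (Finset.mem_erase.mp hi).1]

/-- Identifying `{0,1}^n` with `{0,…,2^n-1}`, a `±1`-valued `σ` has product form
iff for each bit position `k < n`, the first `2^k` values agree with, or are
exactly opposite to, the next `2^k` values. -/
theorem stmt4 (n : ℕ) (σ : ℕ → ℤ) (hσ : ∀ j < 2 ^ n, σ j = 1 ∨ σ j = -1) :
    (∃ (c : ℤ) (ε : Fin n → ℤ), (c = 1 ∨ c = -1) ∧ (∀ i, ε i = 1 ∨ ε i = -1) ∧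
      ∀ j < 2 ^ n, σ j = c * ∏ i : Fin n, (if j.testBit i.val then ε i else 1)) ↔
    (∀ k < n, (∀ j < 2 ^ k, σ (j + 2 ^ k) = σ j) ∨ (∀ j < 2 ^ k, σ (j + 2 ^ k) = -σ j)) := by
  constructor
  · rintro ⟨c, ε, hc, hε, hprod⟩ k hk
    have hbound : ∀ j, j < 2 ^ k → j + 2 ^ k < 2 ^ n := by
      intro j hj
      calc j + 2 ^ k < 2 ^ k + 2 ^ k := by omega
      _ = 2 ^ (k + 1) := by ring
      _ ≤ 2 ^ n := Nat.pow_le_pow_right (by norm_num) hk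
    have key : ∀ j < 2 ^ k, σ (j + 2 ^ k) = ε ⟨k, hk⟩ * σ j := by
      intro j hj
      have hjn : j < 2 ^ n := lt_of_lt_of_le hj (Nat.pow_le_pow_right (by norm_num) hk.le)
      rw [hprod _ (hbound j hj), hprod _ hjn, prod_split hk hj]
      ring
    rcases hε ⟨k, hk⟩ with h | h
    · left; intro j hj; rw [key j hj, h, one_mul]
    · right; intro j hj; rw [key j hj, h]; ring
  · intro h
    have hpos : (0 : ℕ) < 2 ^ n := Nat.pow_pos (by norm_num)
    have hσ0 : σ 0 * σ 0 = 1 := by rcases hσ 0 hpos with h0 | h0 <;> rw [h0] <;> ring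
    refine ⟨σ 0, fun i => σ 0 * σ (2 ^ i.val), hσ 0 hpos, ?_, ?_⟩
    · intro i
      have hlt : 2 ^ i.val < 2 ^ n := Nat.pow_lt_pow_right (by norm_num) i.isLt
      show σ 0 * σ (2 ^ i.val) = 1 ∨ σ 0 * σ (2 ^ i.val) = -1
      rcases hσ 0 hpos with h0 | h0 <;> rcases hσ _ hlt with h1 | h1 <;>
        rw [h0, h1] <;> norm_num
    · intro j
      induction j using Nat.strong_induction_on with
      | _ j IH =>
        intro hjn
        rcases Nat.eq_zero_or_pos j with rfl | hj0
        · simp [Nat.zero_testBit]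
        · set k := Nat.log 2 j with hkdef
          have h1 : 2 ^ k ≤ j := Nat.pow_log_le_self 2 hj0.ne'
          have h2 : j < 2 ^ (k + 1) := Nat.lt_pow_succ_log_self (by norm_num) j
          have hkn : k < n := by
            by_contra hc
            exact absurd (lt_of_le_of_lt h1 hjn)
              (not_lt.mpr (Nat.pow_le_pow_right (by norm_num) (not_lt.mp hc)))
          set j' := j - 2 ^ k with hj'def
          have hj' : j' < 2 ^ k := by
            have : 2 ^ (k + 1) = 2 ^ k + 2 ^ k := by ring
            omega
          have hjj : j = j' + 2 ^ k := by omega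
          have hj'n : j' < 2 ^ n := lt_of_lt_of_le hj'
            (Nat.pow_le_pow_right (by norm_num) hkn.le)
          have hj'lt : j' < j := by
            have : 0 < 2 ^ k := Nat.pow_pos (by norm_num)
            omega
          have IH' := IH j' hj'lt hj'n
          have hpk : (0:ℕ) < 2 ^ k := Nat.pow_pos (by norm_num)
          rcases h k hkn with he | he
          · have e1 : σ j = σ j' := by rw [hjj]; exact he j' hj'
            have e2 : σ (2 ^ k) = σ 0 := by simpa using he 0 hpk
            rw [e1, IH', hjj, prod_split hkn hj']
            show _ = σ 0 * (σ 0 * σ (2 ^ k) * _)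
            rw [e2]
            rcases hσ 0 hpos with h0 | h0 <;> rw [h0] <;> ring
          · have e1 : σ j = -σ j' := by rw [hjj]; exact he j' hj'
            have e2 : σ (2 ^ k) = -σ 0 := by simpa using he 0 hpk
            rw [e1, IH', hjj, prod_split hkn hj']
            show _ = σ 0 * (σ 0 * σ (2 ^ k) * _)
            rw [e2]
            rcases hσ 0 hpos with h0 | h0 <;> rw [h0] <;> ring
end

section
/- Let f : {0,1}^n → {0,1} and define g : {0,1}^(n+2) → {0,1} by g(x, x_{n+1}, x_{n+2}) = f(x) ∧ x_{n+1} ∧ x_{n+2}. Then f has a satisfying assignment if and only if g is neither constant nor balanced. -/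
/-- With `g(x, y, z) = f(x) ∧ y ∧ z` on `n+2` bits, `f` has a satisfying
assignment iff `g` is neither constant nor balanced. -/
theorem stmt10 (n : ℕ) (f : (Fin n → Bool) → Bool) :
    let g : (Fin n → Bool) × Bool × Bool → Bool := fun p => f p.1 && p.2.1 && p.2.2
    (∃ x, f x = true) ↔
      ¬ ((∀ x, g x = false) ∨ (∀ x, g x = true) ∨
        (Finset.univ.filter
          (fun x : (Fin n → Bool) × Bool × Bool => g x = true)).card = 2 ^ (n + 1)) := by
  intro g
  constructor
  · rintro ⟨x, hx⟩ (h | h | h)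
    · have := h (x, true, true); simp [g, hx] at this
    · have := h (x, false, false); simp [g] at this
    · have hcard : (Finset.univ.filter
          (fun x : (Fin n → Bool) × Bool × Bool => g x = true)).card ≤ 2 ^ n := by
        have hinj : Set.InjOn (fun p : (Fin n → Bool) × Bool × Bool => p.1)
            (Finset.univ.filter
              (fun x : (Fin n → Bool) × Bool × Bool => g x = true)) := by
          intro a ha b hb hab
          simp only [Finset.coe_filter, Set.mem_setOf_eq, g, Bool.and_eq_true] at ha hb
          obtain ⟨⟨_, ha1⟩, ha2⟩ := ha.2
          obtain ⟨⟨_, hb1⟩, hb2⟩ := hb.2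
          ext
          · exact congrFun hab _
          · rw [ha1, hb1]
          · rw [ha2, hb2]
        calc (Finset.univ.filter
              (fun x : (Fin n → Bool) × Bool × Bool => g x = true)).card
            ≤ (Finset.univ : Finset (Fin n → Bool)).card :=
              Finset.card_le_card_of_injOn _ (fun _ _ => Finset.mem_univ _) hinj
          _ = 2 ^ n := by simp
      rw [h] at hcard
      have : (2:ℕ) ^ n < 2 ^ (n + 1) := Nat.pow_lt_pow_succ (by norm_num)
      omega
  · intro h
    by_contra hne
    push_neg at hne
    exact h (Or.inl fun x => by
      simp only [g]
      have := hne x.1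
      simp [Bool.eq_false_iff.mpr (fun hc => (hne x.1) hc)])
end

section
/- Let σ : {0,1}^n → {−1,+1} not be of the product form c·∏ᵢ εᵢ^(sᵢ). Then there exist k with 0 ≤ k ≤ n−1 and l, m with 0 ≤ l, m ≤ 2^k − 1 such that σ(l)·σ(2^k + l) ≠ σ(m)·σ(2^k + m); i.e., non-membership in the product family admits a witness checkable with four evaluations of σ. -/
/-- If a `±1`-valued `σ` on `{0,…,2^n-1}` is not of product form, then there is a
witness `(k, l, m)` with `σ(l)·σ(2^k+l) ≠ σ(m)·σ(2^k+m)`, checkable with four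
evaluations of `σ`. -/
theorem stmt16 (n : ℕ) (σ : ℕ → ℤ) (hσ : ∀ j < 2 ^ n, σ j = 1 ∨ σ j = -1)
    (h : ¬ ∃ (c : ℤ) (ε : Fin n → ℤ), (c = 1 ∨ c = -1) ∧ (∀ i, ε i = 1 ∨ ε i = -1) ∧
      ∀ j < 2 ^ n, σ j = c * ∏ i : Fin n, (if j.testBit i.val then ε i else 1)) :
    ∃ k < n, ∃ l < 2 ^ k, ∃ m < 2 ^ k,
      σ l * σ (2 ^ k + l) ≠ σ m * σ (2 ^ k + m) := by
  by_contra hw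
  push_neg at hw
  apply h
  have h0 : σ 0 = 1 ∨ σ 0 = -1 := hσ 0 (by positivity)
  refine ⟨σ 0, fun i => σ 0 * σ (2 ^ i.val), h0, ?_, ?_⟩
  · intro i
    have h2 : σ (2 ^ i.val) = 1 ∨ σ (2 ^ i.val) = -1 :=
      hσ _ (Nat.pow_lt_pow_right one_lt_two i.isLt)
    rcases h0 with h0 | h0 <;> rcases h2 with h2 | h2 <;> simp [h0, h2]
  · intro j
    induction j using Nat.strong_induction_on with
    | _ j ih =>
      intro hj
      rcases Nat.eq_zero_or_pos j with rfl | hjpos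
      · simp [Nat.zero_testBit]
      · set k := Nat.log 2 j with hkdef
        have hk1 : 2 ^ k ≤ j := Nat.pow_log_le_self 2 hjpos.ne'
        have hk2 : j < 2 ^ (k + 1) := Nat.lt_pow_succ_log_self one_lt_two j
        have hkn : k < n := by
          by_contra hkn
          exact absurd (le_trans (Nat.pow_le_pow_right (by norm_num) (not_lt.mp hkn)) hk1)
            (not_le.mpr hj)
        set l := j - 2 ^ k with hldef
        have hlk : l < 2 ^ k := by
          have : 2 ^ (k + 1) = 2 ^ k + 2 ^ k := by ring
          omega
        have hjl : j = 2 ^ k + l := by omega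
        have hln : l < 2 ^ n := lt_of_lt_of_le hlk (Nat.pow_le_pow_right (by norm_num) hkn.le)
        have heq := hw k hkn l hlk 0 (by positivity)
        rw [Nat.add_zero] at heq
        have hIH := ih l (by omega) hln
        have hl2 : σ l * σ l = 1 := by rcases hσ l hln with h' | h' <;> simp [h']
        have hσj : σ j = σ l * σ 0 * σ (2 ^ k) := by
          have : σ l * (σ l * σ (2 ^ k + l)) = σ l * (σ 0 * σ (2 ^ k)) := by rw [heq]
          rw [← mul_assoc, hl2, one_mul] at this
          rw [hjl, this]; ring
        -- bit facts
        have hbitk : j.testBit k = true := by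
          rw [hjl, Nat.testBit_two_pow_add_eq, Nat.testBit_lt_two_pow hlk]; rfl
        have hbitlk : l.testBit k = false := Nat.testBit_lt_two_pow hlk
        have hbit : ∀ i : Fin n, i.val ≠ k → j.testBit i.val = l.testBit i.val := by
          intro i hi
          rcases lt_or_gt_of_ne hi with hlt | hgt
          · rw [hjl, Nat.testBit_two_pow_add_gt hlt]
          · rw [Nat.testBit_lt_two_pow (lt_of_lt_of_le hk2
              (Nat.pow_le_pow_right (by norm_num) hgt)),
              Nat.testBit_lt_two_pow (lt_of_lt_of_le hlk
              (Nat.pow_le_pow_right (by norm_num) hgt.le))]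
        set F : ℕ → Fin n → ℤ := fun m i => if m.testBit i.val then σ 0 * σ (2 ^ i.val) else 1
          with hF
        have hprod : ∀ m : ℕ, ∏ i : Fin n, F m i
            = F m ⟨k, hkn⟩ * ∏ i ∈ Finset.univ.erase ⟨k, hkn⟩, F m i := by
          intro m
          rw [Finset.mul_prod_erase _ _ (Finset.mem_univ _)]
        have hsame : ∏ i ∈ Finset.univ.erase (⟨k, hkn⟩ : Fin n), F j i
            = ∏ i ∈ Finset.univ.erase (⟨k, hkn⟩ : Fin n), F l i := by
          apply Finset.prod_congr rfl
          intro i hi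
          have : i.val ≠ k := fun hc => (Finset.mem_erase.mp hi).1 (Fin.ext hc)
          simp only [hF, hbit i this]
        calc σ j = σ l * σ 0 * σ (2 ^ k) := hσj
          _ = (σ 0 * ∏ i : Fin n, F l i) * σ 0 * σ (2 ^ k) := by rw [← hIH]
          _ = (σ 0 * σ 0) * σ (2 ^ k) * ∏ i : Fin n, F l i := by ring
          _ = σ (2 ^ k) * ∏ i : Fin n, F l i := by
              rcases h0 with h' | h' <;> rw [h'] <;> ring
          _ = σ (2 ^ k) * ∏ i ∈ Finset.univ.erase (⟨k, hkn⟩ : Fin n), F l i := by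
              rw [hprod l]; simp [hF, hbitlk]
          _ = (σ 0 * σ 0) * σ (2 ^ k)
                * ∏ i ∈ Finset.univ.erase (⟨k, hkn⟩ : Fin n), F j i := by
              rw [hsame]; rcases h0 with h' | h' <;> rw [h'] <;> ring
          _ = σ 0 * ∏ i : Fin n, F j i := by
              rw [hprod j]; simp only [hF, hbitk, if_true]; ring
end
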